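/- arXiv:2208.09459 — 2 statements merged into one kernel-verified Lean document; each statement's English description precedes it below -/
import Mathlib

section
/- For sufficiently differentiable functions f₁,…,f_r and h, the Wronskian of the compositions f₁∘h,…,f_r∘h at x equals (h'(x))^{r(r−1)/2} times the Wronskian Wr[f₁,…,f_r] evaluated at h(x). -/
/-- Coefficient functions in the chain rule for iterated derivatives. -/
noncomputable def wcoef (h : ℝ → ℝ) : ℕ → ℕ → (ℝ → ℝ)
  | 0, 0 => fun _ => 1
  | 0, _ + 1 => 0
  | i + 1, 0 => deriv (wcoef h i 0)
  | i + 1, k + 1 => deriv (wcoef h i (k + 1)) + (wcoef h i k) * deriv h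

lemma wcoef_contDiff (h : ℝ → ℝ) (hh : ContDiff ℝ (⊤ : ℕ∞) h) :
    ∀ i k, ContDiff ℝ (⊤ : ℕ∞) (wcoef h i k) := by
  intro i
  induction i with
  | zero =>
    intro k
    cases k with
    | zero => exact contDiff_const
    | succ k => exact contDiff_const
  | succ i ih =>
    intro k
    cases k with
    | zero => exact ((contDiff_infty_iff_deriv.mp (ih 0)).2)
    | succ k =>
      exact ((contDiff_infty_iff_deriv.mp (ih (k+1))).2).add
        ((ih k).mul (contDiff_infty_iff_deriv.mp hh).2)

lemma wcoef_zero (h : ℝ → ℝ) : ∀ i k, i < k → wcoef h i k = 0 := by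
  intro i
  induction i with
  | zero =>
    intro k hk
    cases k with
    | zero => omega
    | succ k => rfl
  | succ i ih =>
    intro k hk
    cases k with
    | zero => omega
    | succ k =>
      show deriv (wcoef h i (k + 1)) + (wcoef h i k) * deriv h = 0
      rw [ih (k+1) (by omega), ih k (by omega)]
      have h0 : deriv (0 : ℝ → ℝ) = 0 := by ext y; exact deriv_const y 0
      rw [h0]; ext y; simp

lemma wcoef_diag (h : ℝ → ℝ) : ∀ i, ∀ x, wcoef h i i x = (deriv h x) ^ i := by
  intro i
  induction i with
  | zero => intro x; rfl
  | succ i ih =>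
    intro x
    show (deriv (wcoef h i (i + 1)) + (wcoef h i i) * deriv h) x = _
    have h0 : deriv (0 : ℝ → ℝ) = 0 := by ext y; exact deriv_const y 0
    rw [wcoef_zero h i (i+1) (by omega), h0]
    simp only [Pi.add_apply, Pi.mul_apply, Pi.zero_apply, zero_add]
    rw [ih x]; ring

lemma iteratedDeriv_comp_eq (h : ℝ → ℝ) (hh : ContDiff ℝ (⊤ : ℕ∞) h) :
    ∀ (i : ℕ) (f : ℝ → ℝ), ContDiff ℝ (i : ℕ∞) f → ∀ x,
      iteratedDeriv i (f ∘ h) x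
        = ∑ k ∈ Finset.range (i + 1), wcoef h i k x * iteratedDeriv k f (h x) := by
  intro i
  induction i with
  | zero =>
    intro f _ x
    simp [wcoef]
  | succ i ih =>
    intro f hf x
    have hfi : ContDiff ℝ (i : ℕ∞) f := hf.of_le (by exact_mod_cast Nat.le_succ i)
    have hrw : iteratedDeriv i (f ∘ h) =
        fun y => ∑ k ∈ Finset.range (i + 1), wcoef h i k y * iteratedDeriv k f (h y) := by
      funext y; exact ih f hfi y
    have hdh : Differentiable ℝ h := hh.differentiable (by simp)
    have hdiffk : ∀ k, k ≤ i → Differentiable ℝ (iteratedDeriv k f) := by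
      intro k hk
      exact hf.differentiable_iteratedDeriv k (by exact_mod_cast Nat.lt_succ_of_le hk)
    have hterm : ∀ k ∈ Finset.range (i + 1),
        DifferentiableAt ℝ (fun y => wcoef h i k y * iteratedDeriv k f (h y)) x := by
      intro k hk
      exact ((wcoef_contDiff h hh i k).differentiable (by simp) x).mul
        (((hdiffk k (by simpa using Nat.lt_succ_iff.mp (Finset.mem_range.mp hk))) (h x)).comp x (hdh x))
    rw [iteratedDeriv_succ, hrw]
    rw [deriv_fun_sum hterm]
    have hstep : ∀ k, k ≤ i →
        deriv (fun y => wcoef h i k y * iteratedDeriv k f (h y)) x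
          = deriv (wcoef h i k) x * iteratedDeriv k f (h x)
            + wcoef h i k x * (iteratedDeriv (k+1) f (h x) * deriv h x) := by
      intro k hk
      have d1 : DifferentiableAt ℝ (wcoef h i k) x :=
        (wcoef_contDiff h hh i k).differentiable (by simp) x
      have d2 : DifferentiableAt ℝ (fun y => iteratedDeriv k f (h y)) x :=
        ((hdiffk k hk) (h x)).comp x (hdh x)
      rw [deriv_fun_mul d1 d2]
      have hcomp := deriv_comp x ((hdiffk k hk) (h x)) (hdh x)
      rw [Function.comp_def] at hcomp
      rw [hcomp, ← iteratedDeriv_succ]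
    rw [Finset.sum_congr rfl (fun k hk => hstep k (Nat.lt_succ_iff.mp (Finset.mem_range.mp hk)))]
    -- Now rearrange to match the RHS
    rw [Finset.sum_add_distrib]
    rw [Finset.sum_range_succ' (fun k => wcoef h (i+1) k x * iteratedDeriv k f (h x)) (i+1)]
    have hc0 : wcoef h (i+1) 0 = deriv (wcoef h i 0) := rfl
    have hcS : ∀ k, wcoef h (i+1) (k+1) x
        = deriv (wcoef h i (k+1)) x + wcoef h i k x * deriv h x := fun k => rfl
    simp only [hc0, hcS]
    have e1 : ∑ k ∈ Finset.range (i+1),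
        (deriv (wcoef h i (k+1)) x + wcoef h i k x * deriv h x) * iteratedDeriv (k+1) f (h x)
      = (∑ k ∈ Finset.range (i+1), deriv (wcoef h i (k+1)) x * iteratedDeriv (k+1) f (h x))
        + ∑ k ∈ Finset.range (i+1), wcoef h i k x * (iteratedDeriv (k+1) f (h x) * deriv h x) := by
      rw [← Finset.sum_add_distrib]
      exact Finset.sum_congr rfl (fun k _ => by ring)
    rw [e1]
    have e2 : ∑ k ∈ Finset.range (i+1), deriv (wcoef h i (k+1)) x * iteratedDeriv (k+1) f (h x)
        = ∑ k ∈ Finset.range (i+1), deriv (wcoef h i k) x * iteratedDeriv k f (h x)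
          - deriv (wcoef h i 0) x * iteratedDeriv 0 f (h x) := by
      have hs1 := Finset.sum_range_succ'
        (fun k => deriv (wcoef h i k) x * iteratedDeriv k f (h x)) (i+1)
      have hs2 := Finset.sum_range_succ
        (fun k => deriv (wcoef h i k) x * iteratedDeriv k f (h x)) (i+1)
      have hF : deriv (wcoef h i (i+1)) x * iteratedDeriv (i+1) f (h x) = 0 := by
        have : wcoef h i (i+1) = 0 := wcoef_zero h i (i+1) (by omega)
        rw [this]
        have h0 : deriv (0 : ℝ → ℝ) = 0 := by ext y; exact deriv_const y 0
        rw [h0]; simp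
      rw [hF] at hs2
      linarith
    rw [e2]
    ring


/-- The Wronskian of functions `f 0, …, f (r-1)` at `x`. -/
noncomputable def wronskian {r : ℕ} (f : Fin r → ℝ → ℝ) (x : ℝ) : ℝ :=
  Matrix.det (Matrix.of fun i j : Fin r => iteratedDeriv (i : ℕ) (f j) x)

/-- `Wr[f₁∘h, …, f_r∘h](x) = (h'(x))^{r(r−1)/2} · Wr[f₁, …, f_r](h(x))`. -/
theorem wronskian_comp (r : ℕ) (f : Fin r → ℝ → ℝ) (h : ℝ → ℝ)
    (hf : ∀ j, ContDiff ℝ ((r - 1 : ℕ) : ℕ∞) (f j))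
    (hh : ContDiff ℝ (⊤ : ℕ∞) h) (x : ℝ) :
    wronskian (fun j => f j ∘ h) x =
      (deriv h x) ^ (r * (r - 1) / 2) * wronskian f (h x) := by
  classical
  have hh' : ContDiff ℝ (⊤ : ℕ∞) h := hh.of_le (mod_cast le_top)
  set L : Matrix (Fin r) (Fin r) ℝ :=
    Matrix.of (fun i k : Fin r => wcoef h (i : ℕ) (k : ℕ) x) with hL
  set B : Matrix (Fin r) (Fin r) ℝ :=
    Matrix.of (fun k j : Fin r => iteratedDeriv (k : ℕ) (f j) (h x)) with hB
  have hAB : (Matrix.of fun i j : Fin r => iteratedDeriv (i : ℕ) ((fun j => f j ∘ h) j) x)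
      = L * B := by
    ext i j
    rw [Matrix.mul_apply]
    have hfi : ContDiff ℝ (((i : ℕ) : ℕ∞)) (f j) := by
      refine (hf j).of_le ?_
      have : (i : ℕ) ≤ r - 1 := by omega
      exact_mod_cast this
    simp only [Matrix.of_apply, hL, hB]
    rw [iteratedDeriv_comp_eq h hh' (i : ℕ) (f j) hfi x]
    rw [Fin.sum_univ_eq_sum_range (fun k => wcoef h (i : ℕ) k x * iteratedDeriv k (f j) (h x)) r]
    refine Finset.sum_subset (Finset.range_subset_range.mpr i.isLt) ?_
    intro k _ hk
    have : wcoef h (i : ℕ) k = 0 := wcoef_zero h _ _ (by simp at hk; omega)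
    rw [this]
    simp
  have hdetL : L.det = (deriv h x) ^ (r * (r - 1) / 2) := by
    have htri : L.BlockTriangular OrderDual.toDual := by
      intro i k hik
      have : (i : ℕ) < (k : ℕ) := hik
      simpa [hL] using congrFun (wcoef_zero h (i : ℕ) (k : ℕ) this) x
    rw [Matrix.det_of_lowerTriangular L htri]
    have : ∀ i : Fin r, L i i = (deriv h x) ^ (i : ℕ) := fun i => wcoef_diag h (i : ℕ) x
    rw [Finset.prod_congr rfl (fun i _ => this i)]
    rw [Finset.prod_pow_eq_pow_sum]
    congr 1
    rw [Fin.sum_univ_eq_sum_range (fun k => k) r]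
    exact Finset.sum_range_id r
  show Matrix.det _ = _
  rw [hAB, Matrix.det_mul, hdetL]
  rfl
end

section
/- Let μ = (μ₁,…,μ_{r}) be a partition with μ_r ≥ 1 written via the strictly decreasing sequence n_j = μ_j + r − j, and let ν = ∅. Then the evaluation at x = 0 of the Wronskian of the Laguerre seed functions L_{n₁}^α,…,L_{n_r}^α equals, up to sign, [∏_{k=1}^{r}(α+k)^{(r−k)} · ∏_{i=1}^{s−1}(α+r)^{(n_i−r+1)} · Δ(−n_r,…,−n_1)] / [∏_{i=s}^{r}(α+1+n_i)^{(r−1−n_i)} · ∏_{i=1}^{r} n_i!], where s is the smallest index such that n_i < r−1 for all i ≥ s (with s = r+1 if no such index exists) and Δ is the Vandermonde product. -/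
/-- Generalized binomial coefficient `binom(a, m) = a(a-1)⋯(a-m+1)/m!`. -/
noncomputable def genBinom (a : ℝ) (m : ℕ) : ℝ :=
  (∏ i ∈ Finset.range m, (a - i)) / m.factorial

/-- The generalized Laguerre polynomial
`L_n^α(x) = Σ_{k=0}^n (−1)^k binom(n+α, n−k) x^k / k!`. -/
noncomputable def laguerre (n : ℕ) (α x : ℝ) : ℝ :=
  ∑ k ∈ Finset.range (n + 1),
    (-1 : ℝ) ^ k * genBinom ((n : ℝ) + α) (n - k) * x ^ k / k.factorial

/-- The rising factorial `(a)^{(k)} = a(a+1)⋯(a+k−1)`. -/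
noncomputable def risingFactorial (a : ℝ) (k : ℕ) : ℝ :=
  ∏ i ∈ Finset.range k, (a + i)

/-!
At `x = 0` the `i`-th derivative of `L_m^α` is `(-1)^i binom(m+α, m-i)`, and `m!` times this is
`m^{\underline i} (α+1+i)^{(m-i)}`. Multiplying row `i` by `(α+1)^{(i)}` turns every entry into
`m^{\underline i} (α+1)^{(m)}`, so the determinant becomes a Vandermonde determinant in the
falling-factorial basis. Dividing the row factors back out is legitimate for generic `α` and
extends to all `α` by continuity, giving `Δ(n) ∏_j (α+r+1-j)^{(n_j-r+j)}` (1-based `j`) over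
`∏_j n_j!`. Splitting each rising factorial at `α + r` rearranges this product into the stated
quotient. When the denominator vanishes, `α = -u` with `1 ≤ u < r`, and then the factor of index
`r - u + 1` vanishes as well, because `n_j ≥ r - j + 1`.
-/

open Finset

theorem risingFactorial_add (a : ℝ) (m k : ℕ) :
    risingFactorial a (m + k) = risingFactorial a m * risingFactorial (a + m) k := by
  simp only [risingFactorial, prod_range_add, Nat.cast_add, add_assoc]

theorem risingFactorial_eq_zero_iff {a : ℝ} {k : ℕ} :
    risingFactorial a k = 0 ↔ ∃ t < k, a + t = 0 := by
  simp [risingFactorial, prod_eq_zero_iff]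

@[fun_prop]
theorem continuous_risingFactorial (k : ℕ) : Continuous fun a => risingFactorial a k := by
  unfold risingFactorial
  fun_prop

theorem genBinom_mul_factorial (a : ℝ) (k : ℕ) :
    genBinom a k * k.factorial = risingFactorial (a - k + 1) k := by
  rw [genBinom, div_mul_cancel₀ _ (by positivity), risingFactorial, ← prod_range_reflect]
  refine prod_congr rfl fun t ht => ?_
  rw [Nat.sub_sub, Nat.cast_sub (by have := mem_range.mp ht; omega)]
  push_cast
  ring

section Laguerre

open Polynomial

theorem iteratedDeriv_eval_zero {𝕜 : Type*} [NontriviallyNormedField 𝕜] (p : 𝕜[X]) (i : ℕ) :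
    iteratedDeriv i (fun x => p.eval x) 0 = i.factorial * p.coeff i := by
  have h : iteratedDeriv i (fun x => p.eval x) = fun x => (derivative^[i] p).eval x := by
    induction i with
    | zero => simp
    | succ i ih =>
      ext x
      rw [iteratedDeriv_succ, ih, Function.iterate_succ_apply', Polynomial.deriv]
  rw [h]
  dsimp only
  rw [← coeff_zero_eq_eval_zero, coeff_iterate_derivative, zero_add,
    Nat.descFactorial_self, nsmul_eq_mul]

noncomputable def laguerrePoly (m : ℕ) (α : ℝ) : ℝ[X] :=
  ∑ k ∈ range (m + 1), C ((-1 : ℝ) ^ k * genBinom ((m : ℝ) + α) (m - k) / k.factorial) * X ^ k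

theorem laguerre_eq_eval (m : ℕ) (α x : ℝ) : laguerre m α x = (laguerrePoly m α).eval x := by
  simp only [laguerre, laguerrePoly, eval_finsetSum, eval_mul, eval_C, eval_pow, eval_X]
  exact sum_congr rfl fun k _ => by ring

theorem coeff_laguerrePoly (m i : ℕ) (α : ℝ) :
    (laguerrePoly m α).coeff i =
      if i ≤ m then (-1 : ℝ) ^ i * genBinom ((m : ℝ) + α) (m - i) / i.factorial else 0 := by
  simp only [laguerrePoly, finsetSum_coeff, coeff_C_mul_X_pow, sum_ite_eq, mem_range,
    Nat.lt_succ_iff]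

theorem iteratedDeriv_laguerre_zero (m i : ℕ) (α : ℝ) :
    iteratedDeriv i (fun x => laguerre m α x) 0 = (-1) ^ i * ((m.factorial : ℝ)⁻¹ *
      ((m.descFactorial i : ℝ) * risingFactorial (α + 1 + i) (m - i))) := by
  simp only [laguerre_eq_eval, iteratedDeriv_eval_zero, coeff_laguerrePoly]
  split_ifs with h
  · have hfac := Nat.factorial_mul_descFactorial h
    have hbinom := genBinom_mul_factorial ((m : ℝ) + α) (m - i)
    rw [Nat.cast_sub h, show (m : ℝ) + α - (m - i) + 1 = α + 1 + i by ring] at hbinom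
    have hdesc : (m.descFactorial i : ℝ) ≠ 0 := by
      exact_mod_cast (Nat.descFactorial_pos.mpr h).ne'
    rw [← hbinom, ← hfac]
    push_cast
    field_simp
  · simp [Nat.descFactorial_eq_zero_iff_lt.mpr (not_le.mp h)]

end Laguerre

theorem det_descFactorial {r : ℕ} (c : Fin r → ℕ) :
    (Matrix.of fun i j : Fin r => ((c j).descFactorial i : ℝ)).det =
      ∏ i : Fin r, ∏ j ∈ Ioi i, ((c j : ℝ) - c i) := by
  rw [← Matrix.det_vandermonde, Matrix.det_eval_matrixOfPolynomials_eq_det_vandermonde _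
    (fun i => descPochhammer ℝ i) (fun i => descPochhammer_natDegree ℝ i)
    (fun i => monic_descPochhammer ℝ i), ← Matrix.det_transpose]
  congr 1
  ext i j
  simp [descPochhammer_eval_eq_descFactorial]

theorem prod_risingFactorial_mul_det {r : ℕ} (c : Fin r → ℕ) (a : ℝ) :
    (∏ i : Fin r, risingFactorial a i) *
        (Matrix.of fun i j : Fin r =>
          ((c j).descFactorial i : ℝ) * risingFactorial (a + i) (c j - i)).det =
      (∏ i : Fin r, ∏ j ∈ Ioi i, ((c j : ℝ) - c i)) * ∏ j, risingFactorial a (c j) := by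
  have hentry : ∀ i j : Fin r, risingFactorial a i *
      (((c j).descFactorial i : ℝ) * risingFactorial (a + i) (c j - i)) =
        risingFactorial a (c j) * (c j).descFactorial i := by
    intro i j
    rcases le_or_gt (i : ℕ) (c j) with h | h
    · rw [← Nat.add_sub_cancel' h, risingFactorial_add, Nat.add_sub_cancel_left]
      ring
    · simp [Nat.descFactorial_eq_zero_iff_lt.mpr h]
  rw [← Matrix.det_mul_column, ← det_descFactorial, mul_comm, ← Matrix.det_mul_row]
  simp only [Matrix.of_apply, hentry]

theorem det_descFactorial_mul_risingFactorial {r : ℕ} (c : Fin r → ℕ)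
    (hc : ∀ j : Fin r, (j.rev : ℕ) ≤ c j) (a : ℝ) :
    (Matrix.of fun i j : Fin r =>
        ((c j).descFactorial i : ℝ) * risingFactorial (a + i) (c j - i)).det =
      (∏ i : Fin r, ∏ j ∈ Ioi i, ((c j : ℝ) - c i)) *
        ∏ j : Fin r, risingFactorial (a + j.rev) (c j - j.rev) := by
  have hgeneric : ∀ a : ℝ, (∀ k < r, a + k ≠ 0) →
      (Matrix.of fun i j : Fin r =>
          ((c j).descFactorial i : ℝ) * risingFactorial (a + i) (c j - i)).det =
        (∏ i : Fin r, ∏ j ∈ Ioi i, ((c j : ℝ) - c i)) *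
          ∏ j : Fin r, risingFactorial (a + j.rev) (c j - j.rev) := by
    intro a ha
    have hne : ∏ i : Fin r, risingFactorial a i ≠ 0 :=
      prod_ne_zero_iff.mpr fun i _ => risingFactorial_eq_zero_iff.not.mpr fun ⟨t, ht, h⟩ =>
        ha t (by omega) h
    have hsplit : ∏ j : Fin r, risingFactorial a (c j) = (∏ i : Fin r, risingFactorial a i) *
        ∏ j : Fin r, risingFactorial (a + j.rev) (c j - j.rev) := by
      rw [← Equiv.prod_comp Fin.revPerm (fun i : Fin r => risingFactorial a i),
        ← prod_mul_distrib]
      refine prod_congr rfl fun j _ => ?_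
      rw [Fin.revPerm_apply, ← risingFactorial_add, Nat.add_sub_cancel' (hc j)]
    apply mul_left_cancel₀ hne
    rw [prod_risingFactorial_mul_det, hsplit]
    ring
  have hdense : Dense {a : ℝ | ∀ k < r, a + k ≠ 0} := by
    convert ((Set.finite_Iio r).image fun k : ℕ => -(k : ℝ)).countable.dense_compl ℝ using 1
    ext a
    simp [neg_eq_iff_add_eq_zero, add_comm]
  refine congrFun (Continuous.ext_on hdense ?_ ?_ hgeneric) a
  · fun_prop
  · fun_prop

theorem wronskian_laguerre_zero_eq_prod {r : ℕ} (α : ℝ) (n : Fin r → ℕ)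
    (hn : ∀ j : Fin r, (j.rev : ℕ) ≤ n j) :
    wronskian (fun j x => laguerre (n j) α x) 0 =
      (∏ i : Fin r, (-1 : ℝ) ^ (i : ℕ)) *
        ((∏ i : Fin r, ∏ j ∈ Ioi i, ((n j : ℝ) - n i)) *
          ∏ j : Fin r, risingFactorial (α + 1 + j.rev) (n j - j.rev)) /
        ∏ j : Fin r, ((n j).factorial : ℝ) := by
  unfold wronskian
  simp only [iteratedDeriv_laguerre_zero]
  have hcol := Matrix.det_mul_column (fun i : Fin r => (-1 : ℝ) ^ (i : ℕ)) (Matrix.of fun i j =>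
    ((n j).factorial : ℝ)⁻¹ * (((n j).descFactorial i : ℝ) * risingFactorial (α + 1 + i) (n j - i)))
  have hrow := Matrix.det_mul_row (fun j : Fin r => ((n j).factorial : ℝ)⁻¹) (Matrix.of fun i j =>
    ((n j).descFactorial i : ℝ) * risingFactorial (α + 1 + i) (n j - i))
  simp only [Matrix.of_apply] at hcol hrow
  rw [hcol, hrow, det_descFactorial_mul_risingFactorial n hn, prod_inv_distrib]
  ring

theorem StrictAnti.add_sub_le {r : ℕ} {n : Fin r → ℕ} (hn : StrictAnti n) {i j : Fin r}
    (hij : i ≤ j) : n j + (j - i) ≤ n i := by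
  suffices h : ∀ d : ℕ, ∀ j : Fin r, (j : ℕ) = i + d → n j + d ≤ n i from
    h _ j (by rw [Fin.le_def] at hij; omega)
  intro d
  induction d with
  | zero => intro j hj; simp [Fin.ext hj]
  | succ d ih =>
    intro j hj
    have hlt : n j < n ⟨i + d, by omega⟩ := hn (Fin.mk_lt_of_lt_val (by omega))
    have := ih ⟨i + d, by omega⟩ rfl
    omega

theorem risingFactorial_mul_risingFactorial {a b : ℝ} {m k l : ℕ} (hb : b = a + m)
    (hl : m + k = l) : risingFactorial a m * risingFactorial b k = risingFactorial a l := by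
  rw [hb, ← hl, risingFactorial_add]

theorem prod_risingFactorial_regroup {r : ℕ} (α : ℝ) (n : Fin r → ℕ) (s : ℕ)
    (hn : ∀ j : Fin r, (j.rev : ℕ) ≤ n j)
    (hsmall : ∀ i : Fin r, s ≤ (i : ℕ) + 1 → n i < r - 1)
    (hbig : ∀ i : Fin r, (i : ℕ) + 1 < s → r - 1 ≤ n i) :
    (∏ k ∈ range r, risingFactorial (α + ((k : ℝ) + 1)) (r - (k + 1))) *
        ∏ i ∈ univ.filter (fun i : Fin r => (i : ℕ) + 1 < s),
          risingFactorial (α + r) (n i + 1 - r) =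
      (∏ i ∈ univ.filter (fun i : Fin r => s ≤ (i : ℕ) + 1),
          risingFactorial (α + 1 + n i) (r - 1 - n i)) *
        ∏ j : Fin r, risingFactorial (α + 1 + j.rev) (n j - j.rev) := by
  rw [← Fin.prod_univ_eq_prod_range (fun k => risingFactorial (α + ((k : ℝ) + 1)) (r - (k + 1))),
    ← Equiv.prod_comp Fin.revPerm, prod_filter, prod_filter, ← prod_mul_distrib,
    ← prod_mul_distrib]
  refine prod_congr rfl fun j _ => ?_
  have hrev : (j.rev : ℕ) + j + 1 = r := by rw [Fin.val_rev]; omega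
  have hrevR : (r : ℝ) = j.rev + j + 1 := by exact_mod_cast hrev.symm
  rw [Fin.revPerm_apply, show α + ((j.rev : ℝ) + 1) = α + 1 + j.rev by ring,
    show r - ((j.rev : ℕ) + 1) = j by omega]
  by_cases hj : (j : ℕ) + 1 < s
  · rw [if_pos hj, if_neg (by omega), one_mul]
    have := hbig j hj
    exact risingFactorial_mul_risingFactorial (by rw [hrevR]; ring) (by omega)
  · rw [if_neg hj, if_pos (by omega), mul_one, mul_comm]
    have := hsmall j (by omega)
    symm
    apply risingFactorial_mul_risingFactorial
    · rw [Nat.cast_sub (hn j)]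
      ring
    · have := hn j
      omega

theorem prod_risingFactorial_rev_eq_zero {r : ℕ} (α : ℝ) (n : Fin r → ℕ)
    (hn : ∀ j : Fin r, (j.rev : ℕ) < n j) {u : ℕ} (hu : 1 ≤ u) (hur : u ≤ r) (hα : α + u = 0) :
    ∏ j : Fin r, risingFactorial (α + 1 + j.rev) (n j - j.rev) = 0 := by
  set j : Fin r := ⟨r - u, by omega⟩
  have hrev : (j.rev : ℕ) = u - 1 := by rw [Fin.val_rev]; simp only [j]; omega
  refine prod_eq_zero (mem_univ j) (risingFactorial_eq_zero_iff.mpr ⟨0, ?_, ?_⟩)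
  · have := hn j
    omega
  · rw [hrev, Nat.cast_sub hu]
    push_cast
    linarith

theorem prod_prod_Ioi_rev {M : Type*} [CommMonoid M] {r : ℕ} (f : Fin r → Fin r → M) :
    ∏ i : Fin r, ∏ j ∈ Ioi i, f i.rev j.rev = ∏ i : Fin r, ∏ j ∈ Ioi i, f j i := by
  rw [prod_sigma', prod_sigma']
  refine prod_nbij' (fun p => ⟨p.2.rev, p.1.rev⟩) (fun p => ⟨p.2.rev, p.1.rev⟩) ?_ ?_ ?_ ?_ ?_ <;>
    simp

/-- Evaluation at `x = 0` of the Wronskian of Laguerre seed functions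
`L_{n₁}^α, …, L_{n_r}^α` (with `n` strictly decreasing, `n_r ≥ 1`, i.e. coming
from a partition `μ` with `μ_r ≥ 1` and `ν = ∅`): up to sign it equals
`[∏_{k=1}^{r}(α+k)^{(r−k)} ∏_{i<s}(α+r)^{(n_i−r+1)} Δ(−n_r,…,−n_1)] /
 [∏_{i≥s}(α+1+n_i)^{(r−1−n_i)} ∏_i n_i!]`,
where `s` is the smallest (1-based) index with `n_i < r−1` for all `i ≥ s`
(`s = r+1` if none exists). -/
theorem wronskian_laguerre_at_zero (r : ℕ) (hr : 1 ≤ r) (α : ℝ)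
    (n : Fin r → ℕ) (hn : StrictAnti n) (hlast : 1 ≤ n ⟨r - 1, by omega⟩)
    (s : ℕ)
    (hsmall : ∀ i : Fin r, s ≤ (i : ℕ) + 1 → n i < r - 1)
    (hbig : ∀ i : Fin r, (i : ℕ) + 1 < s → r - 1 ≤ n i) :
    ∃ ε : ℝ, (ε = 1 ∨ ε = -1) ∧
      wronskian (fun j => fun x => laguerre (n j) α x) 0 =
        ε * ((∏ k ∈ Finset.range r, risingFactorial (α + ((k : ℝ) + 1)) (r - (k + 1))) *
            (∏ i ∈ Finset.univ.filter (fun i : Fin r => (i : ℕ) + 1 < s),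
              risingFactorial (α + r) (n i + 1 - r)) *
            (∏ i : Fin r, ∏ j ∈ Finset.Ioi i, ((n i.rev : ℝ) - (n j.rev : ℝ)))) /
          ((∏ i ∈ Finset.univ.filter (fun i : Fin r => s ≤ (i : ℕ) + 1),
              risingFactorial (α + 1 + (n i : ℝ)) (r - 1 - n i)) *
            ∏ i : Fin r, ((n i).factorial : ℝ)) := by
  have hrev : ∀ j : Fin r, (j.rev : ℕ) < n j := fun j => by
    have := hn.add_sub_le (i := j) (j := ⟨r - 1, by omega⟩) (Fin.le_def.mpr (by dsimp only; omega))
    dsimp only at this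
    rw [Fin.val_rev]
    omega
  refine ⟨∏ i : Fin r, (-1) ^ (i : ℕ), ?_, ?_⟩
  · rw [prod_pow_eq_pow_sum]
    exact neg_one_pow_eq_or ℝ _
  rw [wronskian_laguerre_zero_eq_prod α n fun j => (hrev j).le,
    prod_risingFactorial_regroup α n s (fun j => (hrev j).le) hsmall hbig,
    prod_prod_Ioi_rev fun i j => (n i : ℝ) - n j]
  by_cases hD : ∏ i ∈ univ.filter (fun i : Fin r => s ≤ (i : ℕ) + 1),
      risingFactorial (α + 1 + n i) (r - 1 - n i) = 0
  · obtain ⟨i, hi, hzero⟩ := prod_eq_zero_iff.mp hD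
    obtain ⟨t, ht, hα⟩ := risingFactorial_eq_zero_iff.mp hzero
    have := hsmall i (mem_filter.mp hi).2
    rw [hD, prod_risingFactorial_rev_eq_zero α n hrev (u := n i + 1 + t) (by omega) (by omega)
      (by push_cast; linarith)]
    simp
  · field_simp
end
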